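/- Existence and uniqueness of the simulated response (data-generating recursion solvability): under the input/output partition w = col(u, y) with ng = ny and r_{i,j} = [r_{i,j}^u, r_{i,j}^y], let T ≥ nr, p : {1,…,T} → ℝ^{np}, u : {1,…,T} → ℝ^{nu}, and initial output values y_init : {1,…,nr} → ℝ^{ny} be given, and assume r_{nr,0}^y + Σ_{j=1}^{np} p_j(k+nr)·r_{nr,j}^y is invertible for every k with 1 ≤ k ≤ T − nr. Then there exists exactly one y : {1,…,T} → ℝ^{ny} with y(k) = y_init(k) for k ∈ {1,…,nr} such that (col(u,y), p) locally satisfies the kernel equations. -/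
import Mathlib


open Matrix

noncomputable section

/-- Finite sequences `(col(u,y), p)` on `{1,…,T}` locally satisfy the kernel equations
of the LPV shifted-affine representation under the input/output partition `w = col(u,y)`
with `ng = ny` and coefficient matrices split as `r_{i,j} = [r_{i,j}^u, r_{i,j}^y]`,
where `ru0 i = r_{i,0}^u`, `rup i j = r_{i,j}^u`, `ry0 i = r_{i,0}^y`, `ryp i j = r_{i,j}^y`:
`Σ_{i=0}^{nr} (r_{i,0} + Σ_{j=1}^{np} p_j(k+i) • r_{i,j}) col(u,y)(k+i) = 0`
for all `1 ≤ k ≤ T - nr`. -/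
def locSatIO (nu ny np nr : ℕ)
    (ru0 : Fin (nr + 1) → Matrix (Fin ny) (Fin nu) ℝ)
    (rup : Fin (nr + 1) → Fin np → Matrix (Fin ny) (Fin nu) ℝ)
    (ry0 : Fin (nr + 1) → Matrix (Fin ny) (Fin ny) ℝ)
    (ryp : Fin (nr + 1) → Fin np → Matrix (Fin ny) (Fin ny) ℝ)
    {T : ℕ} (u : Fin T → Fin nu → ℝ) (y : Fin T → Fin ny → ℝ)
    (p : Fin T → Fin np → ℝ) : Prop :=
  ∀ (k : ℕ) (hk : k + nr < T),
    ∑ i : Fin (nr + 1),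
      ((ru0 i + ∑ j : Fin np, p ⟨k + i.val, by omega⟩ j • rup i j) *ᵥ
          u ⟨k + i.val, by omega⟩ +
        (ry0 i + ∑ j : Fin np, p ⟨k + i.val, by omega⟩ j • ryp i j) *ᵥ
          y ⟨k + i.val, by omega⟩) = 0

/-- Extend a finitely indexed family to `ℕ` by zero. -/
def extSeq {T : ℕ} {α : Type*} [Zero α] (f : Fin T → α) : ℕ → α :=
  fun m => if hm : m < T then f ⟨m, hm⟩ else 0

lemma extSeq_eq {T : ℕ} {α : Type*} [Zero α] (f : Fin T → α) (m : ℕ) (hm : m < T) :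
    f ⟨m, hm⟩ = extSeq f m := by unfold extSeq; rw [dif_pos hm]

noncomputable def ysol (ny np nr nu : ℕ)
    (ru0 : Fin (nr + 1) → Matrix (Fin ny) (Fin nu) ℝ)
    (rup : Fin (nr + 1) → Fin np → Matrix (Fin ny) (Fin nu) ℝ)
    (ry0 : Fin (nr + 1) → Matrix (Fin ny) (Fin ny) ℝ)
    (ryp : Fin (nr + 1) → Fin np → Matrix (Fin ny) (Fin ny) ℝ)
    (pe : ℕ → Fin np → ℝ) (ue : ℕ → Fin nu → ℝ)
    (yinit : Fin nr → Fin ny → ℝ) : ℕ → Fin ny → ℝ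
  | n =>
    if h : n < nr then yinit ⟨n, h⟩
    else
      (ry0 (Fin.last nr) + ∑ j : Fin np, pe n j • ryp (Fin.last nr) j)⁻¹ *ᵥ
        (-(∑ i : Fin nr,
            ((ru0 i.castSucc + ∑ j : Fin np, pe (n - nr + i.val) j • rup i.castSucc j) *ᵥ
                ue (n - nr + i.val) +
              (ry0 i.castSucc + ∑ j : Fin np, pe (n - nr + i.val) j • ryp i.castSucc j) *ᵥ
                ysol ny np nr nu ru0 rup ry0 ryp pe ue yinit (n - nr + i.val))) -
          (ru0 (Fin.last nr) + ∑ j : Fin np, pe n j • rup (Fin.last nr) j) *ᵥ ue n)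
  termination_by n => n
  decreasing_by have := i.isLt; omega

lemma ysol_init (ny np nr nu : ℕ)
    (ru0 : Fin (nr + 1) → Matrix (Fin ny) (Fin nu) ℝ)
    (rup : Fin (nr + 1) → Fin np → Matrix (Fin ny) (Fin nu) ℝ)
    (ry0 : Fin (nr + 1) → Matrix (Fin ny) (Fin ny) ℝ)
    (ryp : Fin (nr + 1) → Fin np → Matrix (Fin ny) (Fin ny) ℝ)
    (pe : ℕ → Fin np → ℝ) (ue : ℕ → Fin nu → ℝ)
    (yinit : Fin nr → Fin ny → ℝ) (n : ℕ) (h : n < nr) :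
    ysol ny np nr nu ru0 rup ry0 ryp pe ue yinit n = yinit ⟨n, h⟩ := by
  rw [ysol, dif_pos h]

lemma ysol_rec (ny np nr nu : ℕ)
    (ru0 : Fin (nr + 1) → Matrix (Fin ny) (Fin nu) ℝ)
    (rup : Fin (nr + 1) → Fin np → Matrix (Fin ny) (Fin nu) ℝ)
    (ry0 : Fin (nr + 1) → Matrix (Fin ny) (Fin ny) ℝ)
    (ryp : Fin (nr + 1) → Fin np → Matrix (Fin ny) (Fin ny) ℝ)
    (pe : ℕ → Fin np → ℝ) (ue : ℕ → Fin nu → ℝ)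
    (yinit : Fin nr → Fin ny → ℝ) (n : ℕ) (h : ¬ n < nr) :
    ysol ny np nr nu ru0 rup ry0 ryp pe ue yinit n =
      (ry0 (Fin.last nr) + ∑ j : Fin np, pe n j • ryp (Fin.last nr) j)⁻¹ *ᵥ
        (-(∑ i : Fin nr,
            ((ru0 i.castSucc + ∑ j : Fin np, pe (n - nr + i.val) j • rup i.castSucc j) *ᵥ
                ue (n - nr + i.val) +
              (ry0 i.castSucc + ∑ j : Fin np, pe (n - nr + i.val) j • ryp i.castSucc j) *ᵥ
                ysol ny np nr nu ru0 rup ry0 ryp pe ue yinit (n - nr + i.val))) -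
          (ru0 (Fin.last nr) + ∑ j : Fin np, pe n j • rup (Fin.last nr) j) *ᵥ ue n) := by
  conv_lhs => rw [ysol]
  rw [dif_neg h]

/-- existence and uniqueness of the simulated response (data-generating
recursion solvability): for given input, scheduling, and initial output values on the
first `nr` samples, and with the leading output coefficient matrix invertible along the
window, there exists exactly one output `y` matching the initial values such that
`(col(u,y), p)` locally satisfies the kernel equations. -/
theorem simulated_response_exists_unique
    (nu ny np nr : ℕ) (hnu : 1 ≤ nu + ny) (hnp : 1 ≤ np) (hny : 1 ≤ ny) (hnr : 1 ≤ nr)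
    (ru0 : Fin (nr + 1) → Matrix (Fin ny) (Fin nu) ℝ)
    (rup : Fin (nr + 1) → Fin np → Matrix (Fin ny) (Fin nu) ℝ)
    (ry0 : Fin (nr + 1) → Matrix (Fin ny) (Fin ny) ℝ)
    (ryp : Fin (nr + 1) → Fin np → Matrix (Fin ny) (Fin ny) ℝ)
    (T : ℕ) (hT : nr ≤ T)
    (p : Fin T → Fin np → ℝ)
    (u : Fin T → Fin nu → ℝ)
    (yinit : Fin nr → Fin ny → ℝ)
    (hinv : ∀ (k : ℕ) (hk : k + nr < T),
      IsUnit (ry0 (Fin.last nr) +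
        ∑ j : Fin np, p ⟨k + nr, by omega⟩ j • ryp (Fin.last nr) j)) :
    ∃! y : Fin T → Fin ny → ℝ,
      (∀ (k : Fin T) (hk : k.val < nr), y k = yinit ⟨k.val, hk⟩) ∧
      locSatIO nu ny np nr ru0 rup ry0 ryp u y p := by
  classical
  set pe : ℕ → Fin np → ℝ := extSeq p with hpe
  set ue : ℕ → Fin nu → ℝ := extSeq u with hue
  set Y : ℕ → Fin ny → ℝ := ysol ny np nr nu ru0 rup ry0 ryp pe ue yinit with hY
  have hp : ∀ (m : ℕ) (hm : m < T), p ⟨m, hm⟩ = pe m := fun m hm => extSeq_eq p m hm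
  have hu : ∀ (m : ℕ) (hm : m < T), u ⟨m, hm⟩ = ue m := fun m hm => extSeq_eq u m hm
  have hdet : ∀ (k : ℕ), k + nr < T → IsUnit
      (ry0 (Fin.last nr) + ∑ j : Fin np, pe (k + nr) j • ryp (Fin.last nr) j).det := by
    intro k hk
    rw [← Matrix.isUnit_iff_isUnit_det]
    have h1 := hinv k hk
    simp only [hp] at h1
    exact h1
  -- key recursion identity
  have hMk : ∀ (k : ℕ), k + nr < T →
      (ry0 (Fin.last nr) + ∑ j : Fin np, pe (k + nr) j • ryp (Fin.last nr) j) *ᵥ Y (k + nr) =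
        -(∑ i : Fin nr,
            ((ru0 i.castSucc + ∑ j : Fin np, pe (k + i.val) j • rup i.castSucc j) *ᵥ
                ue (k + i.val) +
              (ry0 i.castSucc + ∑ j : Fin np, pe (k + i.val) j • ryp i.castSucc j) *ᵥ
                Y (k + i.val))) -
          (ru0 (Fin.last nr) + ∑ j : Fin np, pe (k + nr) j • rup (Fin.last nr) j) *ᵥ
            ue (k + nr) := by
    intro k hk
    conv_lhs => rw [hY, ysol_rec ny np nr nu ru0 rup ry0 ryp pe ue yinit (k + nr) (by omega)]
    simp only [Nat.add_sub_cancel]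
    rw [Matrix.mulVec_mulVec, Matrix.mul_nonsing_inv _ (hdet k hk), Matrix.one_mulVec, hY]
  have hEx1 : ∀ (k : Fin T) (hk : k.val < nr),
      (fun t : Fin T => Y t.val) k = yinit ⟨k.val, hk⟩ := by
    intro k hk
    show Y k.val = _
    rw [hY, ysol_init ny np nr nu ru0 rup ry0 ryp pe ue yinit k.val hk]
  have hExSat : locSatIO nu ny np nr ru0 rup ry0 ryp u (fun t => Y t.val) p := by
    intro k hk
    rw [Fin.sum_univ_castSucc]
    simp only [Fin.coe_castSucc, Fin.val_last, hp, hu]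
    rw [hMk k hk]
    abel
  refine ⟨fun t => Y t.val, ⟨hEx1, hExSat⟩, ?_⟩
  rintro y ⟨hy1, hy2⟩
  have huniq : ∀ (n : ℕ) (hn : n < T), y ⟨n, hn⟩ = Y n := by
    intro n
    induction n using Nat.strong_induction_on with
    | _ n ih =>
      intro hn
      by_cases h : n < nr
      · rw [hy1 ⟨n, hn⟩ h, hY, ysol_init ny np nr nu ru0 rup ry0 ryp pe ue yinit n h]
      · have hk : n - nr + nr < T := by omega
        have hdetn : IsUnit
            (ry0 (Fin.last nr) + ∑ j : Fin np, pe n j • ryp (Fin.last nr) j).det := by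
          have h' := hdet (n - nr) hk
          rwa [Nat.sub_add_cancel (not_lt.mp h)] at h'
        have heq := hy2 (n - nr) hk
        rw [Fin.sum_univ_castSucc] at heq
        simp only [Fin.coe_castSucc, Fin.val_last, hp, hu,
          Nat.sub_add_cancel (not_lt.mp h)] at heq
        have h2 : (ry0 (Fin.last nr) + ∑ j : Fin np, pe n j • ryp (Fin.last nr) j) *ᵥ
            y ⟨n, hn⟩ =
            -(∑ i : Fin nr,
                ((ru0 i.castSucc + ∑ j : Fin np, pe (n - nr + i.val) j • rup i.castSucc j) *ᵥ
                    ue (n - nr + i.val) +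
                  (ry0 i.castSucc + ∑ j : Fin np, pe (n - nr + i.val) j • ryp i.castSucc j) *ᵥ
                    y ⟨n - nr + i.val, by omega⟩)) -
              (ru0 (Fin.last nr) + ∑ j : Fin np, pe n j • rup (Fin.last nr) j) *ᵥ ue n := by
          linear_combination heq
        have hsum : (∑ i : Fin nr,
                ((ru0 i.castSucc + ∑ j : Fin np, pe (n - nr + i.val) j • rup i.castSucc j) *ᵥ
                    ue (n - nr + i.val) +
                  (ry0 i.castSucc + ∑ j : Fin np, pe (n - nr + i.val) j • ryp i.castSucc j) *ᵥ
                    y ⟨n - nr + i.val, by omega⟩)) =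
            ∑ i : Fin nr,
                ((ru0 i.castSucc + ∑ j : Fin np, pe (n - nr + i.val) j • rup i.castSucc j) *ᵥ
                    ue (n - nr + i.val) +
                  (ry0 i.castSucc + ∑ j : Fin np, pe (n - nr + i.val) j • ryp i.castSucc j) *ᵥ
                    Y (n - nr + i.val)) := by
          refine Finset.sum_congr rfl fun i _ => ?_
          rw [ih (n - nr + i.val) (by have := i.isLt; omega) (by omega)]
        calc y ⟨n, hn⟩
            = (ry0 (Fin.last nr) + ∑ j : Fin np, pe n j • ryp (Fin.last nr) j)⁻¹ *ᵥ
              ((ry0 (Fin.last nr) + ∑ j : Fin np, pe n j • ryp (Fin.last nr) j) *ᵥ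
                y ⟨n, hn⟩) := by
              rw [Matrix.mulVec_mulVec, Matrix.nonsing_inv_mul _ hdetn, Matrix.one_mulVec]
          _ = Y n := by
              rw [h2, hsum, hY,
                ysol_rec ny np nr nu ru0 rup ry0 ryp pe ue yinit n h]
  funext t
  exact huniq t.val t.isLt

end
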